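/- Let G be a connected graph, U ⊆ V(G), F a graph, and φ a homomorphism from F to G. Then the homomorphisms ψ from F to CFI(G,U) satisfying ρ ∘ ψ = φ (where ρ(v,S) = v) are in bijection with solutions over 𝔽₂ of the system: for each a ∈ V(F), Σ_{e ∈ I(φ(a))} x_e^a = δ_{φ(a),U}; and for each edge {a,b} of F with e = {φ(a),φ(b)}, x_e^a + x_e^b = 0. -/

import Mathlib

open scoped Classical symmDiff

/-- The vertex set of the CFI graph `CFI(G,U)`: pairs `(v,S)` with `S` a set of edges
incident to `v` whose parity matches membership of `v` in `U`. -/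
abbrev CFIVert {V : Type*} (G : SimpleGraph V) (U : Set V) : Type _ :=
  {p : V × Finset (Sym2 V) // ↑p.2 ⊆ G.incidenceSet p.1 ∧
    p.2.card % 2 = (if p.1 ∈ U then 1 else 0)}

/-- The CFI graph `CFI(G,U)`: `(v,S)` and `(u,T)` are adjacent iff `{v,u} ∈ E(G)` and
`{v,u} ∉ S Δ T`. -/
noncomputable def CFI {V : Type*} (G : SimpleGraph V) (U : Set V) :
    SimpleGraph (CFIVert G U) where
  Adj x y := G.Adj x.1.1 y.1.1 ∧ s(x.1.1, y.1.1) ∉ x.1.2 ∆ y.1.2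
  symm := by
    constructor
    rintro x y ⟨h1, h2⟩
    refine ⟨h1.symm, ?_⟩
    rwa [Sym2.eq_swap, symmDiff_comm]
  loopless := ⟨fun x h => h.1.ne rfl⟩

section
variable {V : Type*} [Fintype V] (G : SimpleGraph V)

lemma zmod2_cases (x : ZMod 2) : x = 0 ∨ x = 1 := by revert x; decide

lemma card_filter_sub {v : V} (S : Finset (Sym2 V)) (hS : ↑S ⊆ G.incidenceSet v) :
    (Finset.univ.filter (fun e : {e : Sym2 V // e ∈ G.incidenceSet v} => e.1 ∈ S)).card
      = S.card := by
  apply Finset.card_bij (fun e _ => e.1)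
  · intro e he; exact (Finset.mem_filter.1 he).2
  · intro e₁ h₁ e₂ h₂ h; exact Subtype.ext h
  · intro s hs
    exact ⟨⟨s, hS hs⟩, Finset.mem_filter.2 ⟨Finset.mem_univ _, hs⟩, rfl⟩

end

/-- For a connected graph `G`, `U ⊆ V(G)`, and a homomorphism `φ : F → G`, the
homomorphisms `ψ : F → CFI(G,U)` with `ρ ∘ ψ = φ` are in bijection with the solutions
over `𝔽₂` of the system: `Σ_{e ∈ I(φ a)} x_e^a = δ_{φ a, U}` for every vertex `a` of
`F`, and `x_e^a + x_e^b = 0` for every edge `{a,b}` of `F`, where `e = {φ a, φ b}`. -/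
theorem stmt10 {V VF : Type*} [Fintype V] (G : SimpleGraph V) (hG : G.Connected)
    (U : Set V) (F : SimpleGraph VF) (φ : F →g G) :
    Nonempty (
      {ψ : F →g CFI G U // ∀ a, (ψ a).1.1 = φ a} ≃
      {x : (a : VF) → {e : Sym2 V // e ∈ G.incidenceSet (φ a)} → ZMod 2 //
        (∀ a : VF, (∑ e, x a e) = (if φ a ∈ U then 1 else 0)) ∧
        (∀ (a b : VF) (h : F.Adj a b),
          x a ⟨s(φ a, φ b), G.mk'_mem_incidenceSet_left_iff.2 (φ.map_adj h)⟩ +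
          x b ⟨s(φ a, φ b), G.mk'_mem_incidenceSet_right_iff.2 (φ.map_adj h)⟩ = 0)}) := by
  -- forward map on raw data
  classical
  -- from ψ to x
  set fwd : {ψ : F →g CFI G U // ∀ a, (ψ a).1.1 = φ a} →
      (a : VF) → {e : Sym2 V // e ∈ G.incidenceSet (φ a)} → ZMod 2 :=
    fun ψ a e => if (e : Sym2 V) ∈ (ψ.1 a).1.2 then 1 else 0 with hfwd
  -- from x to a Finset for each vertex
  set ES : ((a : VF) → {e : Sym2 V // e ∈ G.incidenceSet (φ a)} → ZMod 2) → VF →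
      Finset (Sym2 V) :=
    fun x a => (Finset.univ.filter (fun e : {e : Sym2 V // e ∈ G.incidenceSet (φ a)} =>
      x a e = 1)).map ⟨Subtype.val, Subtype.val_injective⟩ with hES
  have memES : ∀ x a (e : Sym2 V), e ∈ ES x a ↔
      ∃ h : e ∈ G.incidenceSet (φ a), x a ⟨e, h⟩ = 1 := by
    intro x a e
    simp only [hES, Finset.mem_map, Finset.mem_filter, Finset.mem_univ, true_and,
      Function.Embedding.coeFn_mk]
    constructor
    · rintro ⟨⟨e', he'⟩, hx, rfl⟩; exact ⟨he', hx⟩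
    · rintro ⟨h, hx⟩; exact ⟨⟨e, h⟩, hx, rfl⟩
  -- properties of ES
  have hESsub : ∀ x a, ↑(ES x a) ⊆ G.incidenceSet (φ a) := by
    intro x a e he
    obtain ⟨h, -⟩ := (memES x a e).1 he
    exact h
  have hEScard : ∀ (x : (a : VF) → {e : Sym2 V // e ∈ G.incidenceSet (φ a)} → ZMod 2),
      (∀ a : VF, (∑ e, x a e) = (if φ a ∈ U then 1 else 0)) →
      ∀ a, (ES x a).card % 2 = (if φ a ∈ U then 1 else 0) := by
    intro x hx a
    have h1 : (∑ e, x a e) = ((ES x a).card : ZMod 2) := by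
      rw [hES]
      simp only [Finset.card_map]
      rw [← Finset.sum_boole]
      refine Finset.sum_congr rfl fun e _ => ?_
      rcases zmod2_cases (x a e) with h | h <;> simp [h]
    have h2 : ((ES x a).card : ZMod 2) = ((if φ a ∈ U then 1 else 0 : ℕ) : ZMod 2) := by
      rw [← h1, hx a]; split <;> simp
    have h3 := congrArg ZMod.val h2
    rw [ZMod.val_natCast, ZMod.val_natCast] at h3
    by_cases hU : φ a ∈ U <;> simp [hU] at h3 ⊢ <;> omega
  -- build the equivalence
  refine ⟨{
    toFun := fun ψ => ⟨fwd ψ, ?_, ?_⟩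
    invFun := fun x => ⟨{ toFun := fun a => ⟨(φ a, ES x.1 a), hESsub x.1 a,
        hEScard x.1 x.2.1 a⟩, map_rel' := ?_ }, fun a => rfl⟩
    left_inv := ?_
    right_inv := ?_ }⟩
  · -- sum condition for fwd
    intro a
    rw [hfwd]
    simp only
    rw [Finset.sum_boole]
    have hsub : ↑(ψ.1 a).1.2 ⊆ G.incidenceSet (φ a) := by
      have := (ψ.1 a).2.1; rwa [ψ.2 a] at this
    rw [card_filter_sub G _ hsub]
    have hcard := (ψ.1 a).2.2
    rw [ψ.2 a] at hcard
    have : (((ψ.1 a).1.2.card : ℕ) : ZMod 2) = (((ψ.1 a).1.2.card % 2 : ℕ) : ZMod 2) := by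
      rw [ZMod.natCast_mod]
    rw [this, hcard]
    split <;> simp
  · -- edge condition for fwd
    intro a b h
    have hadj := ψ.1.map_adj h
    obtain ⟨-, hmem⟩ := hadj
    rw [ψ.2 a, ψ.2 b] at hmem
    rw [Finset.mem_symmDiff] at hmem
    push_neg at hmem
    rw [hfwd]
    simp only
    by_cases h1 : s(φ a, φ b) ∈ (ψ.1 a).1.2
    · have h2 := hmem.1 h1
      simp only [h1, h2, if_true]
      decide
    · have h2 : s(φ a, φ b) ∉ (ψ.1 b).1.2 := fun hc => h1 (hmem.2 hc)
      simp [h1, h2]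
  · -- map_rel for inverse
    intro a b h
    refine ⟨φ.map_adj h, ?_⟩
    rw [Finset.mem_symmDiff]
    push_neg
    have hx := x.2.2 a b h
    have key : x.1 a ⟨s(φ a, φ b), G.mk'_mem_incidenceSet_left_iff.2 (φ.map_adj h)⟩ =
        x.1 b ⟨s(φ a, φ b), G.mk'_mem_incidenceSet_right_iff.2 (φ.map_adj h)⟩ := by
      rcases zmod2_cases (x.1 a ⟨s(φ a, φ b),
          G.mk'_mem_incidenceSet_left_iff.2 (φ.map_adj h)⟩) with h1 | h1 <;>
        rcases zmod2_cases (x.1 b ⟨s(φ a, φ b),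
          G.mk'_mem_incidenceSet_right_iff.2 (φ.map_adj h)⟩) with h2 | h2 <;>
        simp_all
    constructor
    · intro hmem
      obtain ⟨ha, hxa⟩ := (memES x.1 a _).1 hmem
      refine (memES x.1 b _).2 ⟨G.mk'_mem_incidenceSet_right_iff.2 (φ.map_adj h), ?_⟩
      rw [← key]
      convert hxa
    · intro hmem
      obtain ⟨hb, hxb⟩ := (memES x.1 b _).1 hmem
      refine (memES x.1 a _).2 ⟨G.mk'_mem_incidenceSet_left_iff.2 (φ.map_adj h), ?_⟩
      rw [key]
      convert hxb
  · -- left inverse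
    intro ψ
    apply Subtype.ext
    apply DFunLike.ext
    intro a
    apply Subtype.ext
    have hvert : (ψ.1 a).1.1 = φ a := ψ.2 a
    show (φ a, ES (fwd ψ) a) = (ψ.1 a).1
    refine Prod.ext_iff.mpr ⟨hvert.symm, ?_⟩
    · show ES (fwd ψ) a = (ψ.1 a).1.2
      ext e
      rw [memES]
      constructor
      · rintro ⟨h, hx⟩
        rw [hfwd] at hx
        by_contra hc
        simp [hc] at hx
      · intro he
        have hsub : ↑(ψ.1 a).1.2 ⊆ G.incidenceSet (φ a) := by
          have := (ψ.1 a).2.1; rwa [ψ.2 a] at this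
        exact ⟨hsub he, by rw [hfwd]; simp [he]⟩
  · -- right inverse
    intro x
    apply Subtype.ext
    funext a e
    show (if (e : Sym2 V) ∈ ES x.1 a then (1 : ZMod 2) else 0) = x.1 a e
    rcases zmod2_cases (x.1 a e) with h | h
    · rw [if_neg, h]
      intro hc
      obtain ⟨h', hx'⟩ := (memES x.1 a _).1 hc
      have he : (⟨(e : Sym2 V), h'⟩ : {e : Sym2 V // e ∈ G.incidenceSet (φ a)}) = e :=
        Subtype.ext rfl
      rw [he, h] at hx'
      exact zero_ne_one hx'
    · rw [if_pos, h]
      exact (memES x.1 a _).2 ⟨e.2, by rwa [Subtype.coe_eta]⟩
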